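/- Let E be an open real interval. A function F : Eⁿ → E is a nondecreasing order invariant function if and only if it is a lattice polynomial function (restricted to Eⁿ). -/

import Mathlib

/-- Lattice polynomial functions: built from projections by pointwise min and max. -/
inductive IsLatticePoly {α : Type*} [LinearOrder α] (n : ℕ) : ((Fin n → α) → α) → Prop
  | proj (k : Fin n) : IsLatticePoly n (fun x => x k)
  | inf {p q : (Fin n → α) → α} : IsLatticePoly n p → IsLatticePoly n q →
      IsLatticePoly n (fun x => min (p x) (q x))
  | sup {p q : (Fin n → α) → α} : IsLatticePoly n p → IsLatticePoly n q →
      IsLatticePoly n (fun x => max (p x) (q x))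

/-!
An automorphism of `E` fixing the coordinates of `x` must fix `F x`, and the automorphisms of an
open interval can move any point off a finite set; hence `F x` is one of the coordinates `x i`.
On vectors taking two values `v < V`, `F` therefore only chooses between `v` and `V`, and by
2-transitivity of the automorphism group this choice depends only on the set `S` of coordinates
carrying `V`. Monotonicity then gives `F x = max_{S winning} min_{i ∈ S} x i`.
-/

open Set

theorem OrderIso.exists_piecewise {α : Type*} [LinearOrder α] (ψ₁ ψ₂ : α ≃o α) {p : α}
    (hp : ψ₁ p = ψ₂ p) :
    ∃ ψ : α ≃o α, (∀ t ≤ p, ψ t = ψ₁ t) ∧ ∀ t, p ≤ t → ψ t = ψ₂ t := by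
  let f : α → α := fun t => if t ≤ p then ψ₁ t else ψ₂ t
  have hf_mono : StrictMono f := by
    intro s t hst
    by_cases ht : t ≤ p
    · simpa [f, ht, hst.le.trans ht] using ψ₁.strictMono hst
    by_cases hs : s ≤ p
    · simp only [f, if_pos hs, if_neg ht]
      calc ψ₁ s ≤ ψ₁ p := ψ₁.monotone hs
        _ = ψ₂ p := hp
        _ < ψ₂ t := ψ₂.strictMono (not_le.1 ht)
    · simpa [f, hs, ht] using ψ₂.strictMono hst
  have hf_surj : Function.Surjective f := by
    intro y
    by_cases hy : y ≤ ψ₁ p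
    · exact ⟨ψ₁.symm y, by simp [f, ψ₁.symm_apply_le.2 hy]⟩
    · refine ⟨ψ₂.symm y, ?_⟩
      have : p < ψ₂.symm y := ψ₂.lt_symm_apply.2 (hp ▸ not_le.1 hy)
      simp [f, this.not_ge]
  refine ⟨hf_mono.orderIsoOfSurjective f hf_surj, fun t ht => if_pos ht, fun t ht => ?_⟩
  show f t = ψ₂ t
  rcases ht.lt_or_eq with ht | rfl
  · exact if_neg ht.not_ge
  · exact (if_pos le_rfl).trans hp

section OrderedField

variable {𝕜 : Type*} [Field 𝕜] [LinearOrder 𝕜] [IsStrictOrderedRing 𝕜]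

theorem exists_orderIso_apply_eq_apply_eq {a b c d : 𝕜} (hab : a < b) (hcd : c < d) :
    ∃ ψ : 𝕜 ≃o 𝕜, ψ a = c ∧ ψ b = d := by
  refine ⟨(OrderIso.addRight (-a)).trans ((OrderIso.mulRight₀ ((d - c) / (b - a))
    (div_pos (sub_pos.2 hcd) (sub_pos.2 hab))).trans (OrderIso.addRight c)), ?_, ?_⟩
  · simp
  · have : b - a ≠ 0 := (sub_pos.2 hab).ne'
    simp [← sub_eq_add_neg, mul_div_cancel₀ _ this]

theorem exists_orderIso_apply_eq_of_mem_Ioo {l r p q : 𝕜} (hp : p ∈ Ioo l r)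
    (hq : q ∈ Ioo l r) : ∃ ψ : 𝕜 ≃o 𝕜, ψ p = q ∧ ∀ t ∉ Ioo l r, ψ t = t := by
  -- `ψ` is the identity off `[l, r]` and affine on `[l, p]` and on `[p, r]`.
  obtain ⟨A₁, hA₁l, hA₁p⟩ := exists_orderIso_apply_eq_apply_eq hp.1 hq.1
  obtain ⟨A₂, hA₂p, hA₂r⟩ := exists_orderIso_apply_eq_apply_eq hp.2 hq.2
  obtain ⟨ψ₃, hψ₃A, hψ₃r⟩ := A₂.exists_piecewise (OrderIso.refl 𝕜) hA₂r
  obtain ⟨ψ₂, hψ₂A, hψ₂p⟩ := A₁.exists_piecewise ψ₃ (by rw [hψ₃A p hp.2.le, hA₁p, hA₂p])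
  obtain ⟨ψ, hψl, hψ₂⟩ := (OrderIso.refl 𝕜).exists_piecewise ψ₂
    (by rw [hψ₂A l hp.1.le, hA₁l]; rfl)
  refine ⟨ψ, by rw [hψ₂ p hp.1.le, hψ₂A p le_rfl, hA₁p], fun t ht => ?_⟩
  rcases le_or_gt t l with htl | hlt
  · exact hψl t htl
  · have hrt : r ≤ t := not_lt.1 fun htr => ht ⟨hlt, htr⟩
    rw [hψ₂ t hlt.le, hψ₂p t (hp.2.le.trans hrt), hψ₃r t hrt]
    rfl

end OrderedField

theorem Set.OrdConnected.exists_orderIso_restrict {α : Type*} [LinearOrder α] {s : Set α}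
    (hs : s.OrdConnected) {l r : α} (hl : l ∈ s) (hr : r ∈ s) (ψ : α ≃o α)
    (hψ : ∀ t ∉ Ioo l r, ψ t = t) : ∃ φ : s ≃o s, ∀ t, (φ t : α) = ψ t := by
  have hmem : ∀ t, t ∈ s ↔ ψ t ∈ s := by
    intro t
    by_cases ht : t ∈ Ioo l r
    · have hψt : ψ t ∈ Ioo l r := by
        rw [← hψ l (fun h => h.1.false), ← hψ r (fun h => h.2.false)]
        exact ⟨ψ.strictMono ht.1, ψ.strictMono ht.2⟩
      exact iff_of_true (hs.out hl hr (Ioo_subset_Icc_self ht))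
        (hs.out hl hr (Ioo_subset_Icc_self hψt))
    · rw [hψ t ht]
  exact ⟨{ Equiv.subtypeEquiv ψ.toEquiv hmem with map_rel_iff' := ψ.le_iff_le }, fun t => rfl⟩

theorem Finset.exists_lt_forall_lt_imp_le {α : Type*} [LinearOrder α] [NoMinOrder α]
    (T : Finset α) (c : α) : ∃ l < c, ∀ t ∈ T, t < c → t ≤ l := by
  induction T using Finset.induction_on with
  | empty =>
    obtain ⟨l, hl⟩ := exists_lt c
    exact ⟨l, hl, by simp⟩
  | insert a T _ ih =>
    obtain ⟨l, hlc, hl⟩ := ih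
    by_cases ha : a < c
    · refine ⟨max l a, max_lt hlc ha, ?_⟩
      simp only [Finset.mem_insert, forall_eq_or_imp]
      exact ⟨fun _ => le_max_right l a, fun t ht htc => (hl t ht htc).trans (le_max_left l a)⟩
    · refine ⟨l, hlc, ?_⟩
      simp only [Finset.mem_insert, forall_eq_or_imp]
      exact ⟨fun h => absurd h ha, hl⟩

theorem Finset.exists_gt_forall_gt_imp_le {α : Type*} [LinearOrder α] [NoMaxOrder α]
    (T : Finset α) (c : α) : ∃ r > c, ∀ t ∈ T, c < t → r ≤ t :=
  Finset.exists_lt_forall_lt_imp_le (α := αᵒᵈ) T c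

theorem IsOpen.noMaxOrder_subtype {α : Type*} [TopologicalSpace α] [LinearOrder α]
    [OrderTopology α] [DenselyOrdered α] [NoMaxOrder α] {s : Set α} (hs : IsOpen s) :
    NoMaxOrder s := by
  refine ⟨fun t => ?_⟩
  obtain ⟨u, hus, htu⟩ := ((eventually_nhdsWithin_of_eventually_nhds (hs.mem_nhds t.2)).and
    (self_mem_nhdsWithin : Ioi t.1 ∈ nhdsWithin t.1 (Ioi t.1))).exists
  exact ⟨⟨u, hus⟩, htu⟩

theorem IsOpen.noMinOrder_subtype {α : Type*} [TopologicalSpace α] [LinearOrder α]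
    [OrderTopology α] [DenselyOrdered α] [NoMinOrder α] {s : Set α} (hs : IsOpen s) :
    NoMinOrder s := by
  refine ⟨fun t => ?_⟩
  obtain ⟨u, hus, hut⟩ := ((eventually_nhdsWithin_of_eventually_nhds (hs.mem_nhds t.2)).and
    (self_mem_nhdsWithin : Iio t.1 ∈ nhdsWithin t.1 (Iio t.1))).exists
  exact ⟨⟨u, hus⟩, hut⟩

def HasMovingAutomorphisms (α : Type*) [LinearOrder α] : Prop :=
  ∀ (T : Finset α) (c : α), c ∉ T → ∃ φ : α ≃o α, (∀ t ∈ T, φ t = t) ∧ φ c ≠ c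

def IsOrderTwoTransitive (α : Type*) [LinearOrder α] : Prop :=
  ∀ ⦃a b v V : α⦄, a < b → v < V → ∃ φ : α ≃o α, φ a = v ∧ φ b = V

namespace Set.OrdConnected

variable {𝕜 : Type*} [Field 𝕜] [LinearOrder 𝕜] [IsStrictOrderedRing 𝕜] {s : Set 𝕜}

theorem exists_orderIso_apply_eq (hs : s.OrdConnected) {l r p q : s} (hp : p ∈ Ioo l r)
    (hq : q ∈ Ioo l r) : ∃ φ : s ≃o s, φ p = q ∧ ∀ t ∉ Ioo l r, φ t = t := by
  obtain ⟨ψ, hψpq, hψ⟩ := exists_orderIso_apply_eq_of_mem_Ioo (l := (l : 𝕜)) (r := r) hp hq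
  obtain ⟨φ, hφ⟩ := hs.exists_orderIso_restrict l.2 r.2 ψ hψ
  exact ⟨φ, Subtype.ext (by rw [hφ, hψpq]), fun t ht => Subtype.ext (by rw [hφ, hψ t ht])⟩

theorem hasMovingAutomorphisms (hs : s.OrdConnected) [NoMinOrder s] [NoMaxOrder s] :
    HasMovingAutomorphisms s := by
  intro T c hc
  obtain ⟨l, hlc, hl⟩ := T.exists_lt_forall_lt_imp_le c
  obtain ⟨r, hcr, hr⟩ := T.exists_gt_forall_gt_imp_le c
  obtain ⟨q, hlq, hqc⟩ := exists_between hlc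
  obtain ⟨φ, hφc, hφ⟩ := hs.exists_orderIso_apply_eq ⟨hlc, hcr⟩ ⟨hlq, hqc.trans hcr⟩
  refine ⟨φ, fun t ht => hφ t fun htlr => ?_, hφc.trans_ne hqc.ne⟩
  rcases lt_or_gt_of_ne (ne_of_mem_of_not_mem ht hc) with htc | hct
  · exact (hl t ht htc).not_gt htlr.1
  · exact (hr t ht hct).not_gt htlr.2

theorem isOrderTwoTransitive (hs : s.OrdConnected) [NoMinOrder s] [NoMaxOrder s] :
    IsOrderTwoTransitive s := by
  intro a b v V hab hvV
  obtain ⟨l, hl⟩ := exists_lt (min a v)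
  obtain ⟨r, hr⟩ := exists_gt (max b V)
  simp only [lt_min_iff, max_lt_iff] at hl hr
  obtain ⟨φ₁, hφ₁a, hφ₁⟩ :=
    hs.exists_orderIso_apply_eq ⟨hl.1, hab.trans hr.1⟩ ⟨hl.2, hvV.trans hr.2⟩
  have hφ₁b : φ₁ b ∈ Ioo v r := by
    rw [← hφ₁a, ← hφ₁ r fun h => h.2.false]
    exact ⟨φ₁.strictMono hab, φ₁.strictMono hr.1⟩
  obtain ⟨φ₂, hφ₂b, hφ₂⟩ := hs.exists_orderIso_apply_eq hφ₁b ⟨hvV, hr.2⟩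
  exact ⟨φ₁.trans φ₂, by simp [hφ₁a, hφ₂ v fun h => h.1.false], by simp [hφ₂b]⟩

end Set.OrdConnected

namespace IsLatticePoly

variable {α : Type*} [LinearOrder α] {n : ℕ} {p : (Fin n → α) → α}

theorem monotone (hp : IsLatticePoly n p) : Monotone p := by
  induction hp with
  | proj k => exact fun x y h => h k
  | inf _ _ ihp ihq => exact fun x y h => min_le_min (ihp h) (ihq h)
  | sup _ _ ihp ihq => exact fun x y h => max_le_max (ihp h) (ihq h)

theorem apply_comp (hp : IsLatticePoly n p) {φ : α → α} (hφ : Monotone φ) (x : Fin n → α) :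
    p (fun i => φ (x i)) = φ (p x) := by
  induction hp with
  | proj k => rfl
  | inf _ _ ihp ihq => simp only [ihp, ihq, hφ.map_min]
  | sup _ _ ihp ihq => simp only [ihp, ihq, hφ.map_max]

theorem finset_inf' {ι : Type*} {s : Finset ι} (hs : s.Nonempty) {p : ι → (Fin n → α) → α}
    (hp : ∀ i ∈ s, IsLatticePoly n (p i)) : IsLatticePoly n fun x => s.inf' hs fun i => p i x := by
  induction hs using Finset.Nonempty.cons_induction with
  | singleton a => simpa using hp a (Finset.mem_singleton_self a)
  | cons a s _ hs ih =>
    simp only [Finset.inf'_cons hs]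
    exact .inf (hp a (Finset.mem_cons_self a s)) (ih fun i hi => hp i (Finset.mem_cons_of_mem hi))

theorem finset_sup' {ι : Type*} {s : Finset ι} (hs : s.Nonempty) {p : ι → (Fin n → α) → α}
    (hp : ∀ i ∈ s, IsLatticePoly n (p i)) : IsLatticePoly n fun x => s.sup' hs fun i => p i x := by
  induction hs using Finset.Nonempty.cons_induction with
  | singleton a => simpa using hp a (Finset.mem_singleton_self a)
  | cons a s _ hs ih =>
    simp only [Finset.sup'_cons hs]
    exact .sup (hp a (Finset.mem_cons_self a s)) (ih fun i hi => hp i (Finset.mem_cons_of_mem hi))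

end IsLatticePoly

section OrderInvariant

variable {α : Type*} [LinearOrder α] {n : ℕ}

def IsOrderInvariant (F : (Fin n → α) → α) : Prop :=
  ∀ (φ : α ≃o α) (x : Fin n → α), F (fun i => φ (x i)) = φ (F x)

/-- `S` is a winning coalition of the Boolean function that `F` induces on two-valued vectors. -/
def IsWinning (F : (Fin n → α) → α) (S : Finset (Fin n)) : Prop :=
  ∀ ⦃v V : α⦄, v < V → F (fun i => if i ∈ S then V else v) = V

theorem IsWinning.le_apply [NoMinOrder α] {F : (Fin n → α) → α} (hmono : Monotone F)
    {S : Finset (Fin n)} (hS : IsWinning F S) {x : Fin n → α} {t : α} (ht : ∀ i ∈ S, t ≤ x i) :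
    t ≤ F x := by
  have : Nonempty α := ⟨t⟩
  obtain ⟨t', ht'⟩ := exists_lt t
  obtain ⟨M, hM⟩ := Finite.exists_ge x
  calc t = F (fun i => if i ∈ S then t else min t' M) := (hS (min_lt_of_left_lt ht')).symm
    _ ≤ F x := hmono fun i => by
      split_ifs with hi
      exacts [ht i hi, min_le_of_right_le (hM i)]

end OrderInvariant

namespace IsOrderInvariant

variable {α : Type*} [LinearOrder α] {n : ℕ} {F : (Fin n → α) → α}

theorem apply_mem_range (hF : IsOrderInvariant F) (hα : HasMovingAutomorphisms α)
    (x : Fin n → α) : F x ∈ range x := by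
  by_contra hx
  obtain ⟨φ, hφx, hφF⟩ := hα (Finset.univ.image x) (F x) (by simpa using hx)
  have hφx : (fun i => φ (x i)) = x := funext fun i => hφx _ (by simp)
  exact hφF (by rw [← hF φ x, hφx])

theorem apply_const (hF : IsOrderInvariant F) (hα : HasMovingAutomorphisms α) (t : α) :
    F (fun _ => t) = t := by
  obtain ⟨i, hi⟩ := hF.apply_mem_range hα fun _ => t
  exact hi.symm

theorem isWinning_of_apply_eq (hF : IsOrderInvariant F) (hα : IsOrderTwoTransitive α)
    {S : Finset (Fin n)} {v V : α} (hvV : v < V) (h : F (fun i => if i ∈ S then V else v) = V) :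
    IsWinning F S := by
  intro a b hab
  obtain ⟨φ, hφv, hφV⟩ := hα hvV hab
  have hφ := hF φ fun i => if i ∈ S then V else v
  simp only [apply_ite φ, hφv, hφV, h] at hφ
  exact hφ

theorem isWinning_filter_apply_le [NoMinOrder α] (hF : IsOrderInvariant F) (hmono : Monotone F)
    (hα₁ : HasMovingAutomorphisms α) (hα₂ : IsOrderTwoTransitive α) (x : Fin n → α) :
    IsWinning F {i | F x ≤ x i} := by
  have : Nonempty α := ⟨F x⟩
  obtain ⟨k, hk⟩ := hF.apply_mem_range hα₁ x
  obtain ⟨v, hvF, hv⟩ := (Finset.univ.image x).exists_lt_forall_lt_imp_le (F x)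
  obtain ⟨V, hV⟩ := Finite.exists_le x
  set y : Fin n → α := fun i => if i ∈ {i | F x ≤ x i} then V else v
  have hxy : x ≤ y := fun i => by
    by_cases hi : F x ≤ x i
    · simpa [y, hi] using hV i
    · simpa [y, hi] using hv (x i) (by simp) (not_le.1 hi)
  have hvV : v < V := hvF.trans_le (hk ▸ hV k)
  refine hF.isWinning_of_apply_eq hα₂ hvV ?_
  obtain ⟨i, hi⟩ := hF.apply_mem_range hα₁ y
  -- `F y` is `v` or `V`, and it cannot be `v` since `v < F x ≤ F y`.
  by_cases hiS : F x ≤ x i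
  · simpa [y, hiS] using hi.symm
  · have : v = F y := by simpa [y, hiS] using hi
    exact absurd (hmono hxy) (this ▸ hvF).not_ge

theorem isLatticePoly [NoMinOrder α] (hF : IsOrderInvariant F) (hmono : Monotone F)
    (hα₁ : HasMovingAutomorphisms α) (hα₂ : IsOrderTwoTransitive α) : IsLatticePoly n F := by
  classical
  rcases n.eq_zero_or_pos with rfl | hn
  · exact absurd (hF.apply_mem_range hα₁ Fin.elim0) (by simp)
  let 𝒲 : Finset {S : Finset (Fin n) // S.Nonempty} := Finset.univ.filter (IsWinning F ·.1)
  have h𝒲 : 𝒲.Nonempty := ⟨⟨Finset.univ, Finset.univ_nonempty_iff.2 (Fin.pos_iff_nonempty.1 hn)⟩,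
    Finset.mem_filter.2 ⟨Finset.mem_univ _, fun _ V _ => by simpa using hF.apply_const hα₁ V⟩⟩
  have hF𝒲 : F = fun x => 𝒲.sup' h𝒲 fun S => S.1.inf' S.2 x := by
    funext x
    refine le_antisymm ?_ (Finset.sup'_le _ _ fun S hS =>
      (Finset.mem_filter.1 hS).2.le_apply hmono fun i hi => Finset.inf'_le x hi)
    obtain ⟨k, hk⟩ := hF.apply_mem_range hα₁ x
    exact Finset.le_sup'_of_le _ (b := ⟨({i | F x ≤ x i} : Finset (Fin n)), k, by simp [hk]⟩)
      (by simpa [𝒲] using hF.isWinning_filter_apply_le hmono hα₁ hα₂ x)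
      (Finset.le_inf' _ _ fun i hi => by simpa using hi)
  rw [hF𝒲]
  exact .finset_sup' _ fun S _ => .finset_inf' _ fun i _ => .proj i

end IsOrderInvariant

theorem nondecreasing_orderInvariant_iff_latticePoly_general (n : ℕ) (E : Set ℝ)
    (hopen : IsOpen E) (hE : E.OrdConnected)
    (F : (Fin n → E) → E) :
    (Monotone F ∧
      ∀ φ : E → E, StrictMono φ → Function.Bijective φ →
        ∀ x : Fin n → E, F (fun i => φ (x i)) = φ (F x)) ↔
    IsLatticePoly n F := by
  have := hopen.noMinOrder_subtype
  have := hopen.noMaxOrder_subtype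
  constructor
  · rintro ⟨hmono, hinv⟩
    have hF : IsOrderInvariant F := fun φ x => hinv φ φ.strictMono φ.bijective x
    exact hF.isLatticePoly hmono hE.hasMovingAutomorphisms hE.isOrderTwoTransitive
  · intro hF
    exact ⟨hF.monotone, fun φ hφ _ x => hF.apply_comp hφ.monotone x⟩

/-- On an open real interval `E`, the nondecreasing order invariant functions
`F : Eⁿ → E` are exactly the lattice polynomial functions. -/
theorem nondecreasing_orderInvariant_iff_latticePoly (n : ℕ) (E : Set ℝ)
    (hne : E.Nonempty) (hopen : IsOpen E) (hE : E.OrdConnected)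
    (F : (Fin n → E) → E) :
    (Monotone F ∧
      ∀ φ : E → E, StrictMono φ → Function.Bijective φ →
        ∀ x : Fin n → E, F (fun i => φ (x i)) = φ (F x)) ↔
    IsLatticePoly n F :=
  nondecreasing_orderInvariant_iff_latticePoly_general n E hopen hE F
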